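/- Let n ∈ ℕ and let h_μ, h_σ, r_μ, r_σ, t_μ, t_σ ∈ ℝⁿ with every entry of h_σ, r_σ, t_σ nonzero. For k > 0, let x_k be the product over i of the uniform probability measure on [−√3/k, √3/k]. Define A(x) = r_σ ⊙ (h_σ ⊙ x + h_μ) + r_μ and B(x) = t_σ ⊙ x + t_μ. Then (i) for every k > 0, −W₂²(A_*x_k, B_*x_k) = −‖r_σ ⊙ h_μ + r_μ − t_μ‖² − (1/k²)·‖|r_σ ⊙ h_σ| − |t_σ|‖², and (ii) the function k ↦ −W₂²(A_*x_k, B_*x_k) tends to −‖r_σ ⊙ h_μ + r_μ − t_μ‖² as k → ∞. -/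

import Mathlib

open MeasureTheory ProbabilityTheory
open scoped ENNReal NNReal

/-- The uniform probability measure on `[a, b]`: `(b - a)⁻¹ • (volume.restrict (Set.Icc a b))`. -/
noncomputable def unif (a b : ℝ) : Measure ℝ :=
  (ENNReal.ofReal (b - a))⁻¹ • volume.restrict (Set.Icc a b)

/-- Squared 2-Wasserstein distance between two measures on `ℝⁿ = (Fin n → ℝ)` with the
Euclidean norm `‖x - y‖² = ∑ i, (x i - y i)²`: the infimum over all couplings `γ` of `p` and
`q` of `∫ ‖x - y‖² dγ(x, y)`. -/
noncomputable def W2sqPi {n : ℕ} (p q : Measure (Fin n → ℝ)) : ℝ :=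
  sInf { c | ∃ γ : Measure ((Fin n → ℝ) × (Fin n → ℝ)), IsProbabilityMeasure γ ∧
    γ.map Prod.fst = p ∧ γ.map Prod.snd = q ∧ c = ∫ z, ∑ i, (z.1 i - z.2 i) ^ 2 ∂γ }

section OneD
variable {a : ℝ}

lemma unif_prob (ha : 0 < a) : IsProbabilityMeasure (unif (-a) a) := by
  constructor
  rw [unif, Measure.smul_apply, Measure.restrict_apply MeasurableSet.univ, Set.univ_inter,
    Real.volume_Icc, smul_eq_mul]
  rw [ENNReal.inv_mul_cancel]
  · simp only [ne_eq, ENNReal.ofReal_eq_zero, not_le]; linarith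
  · exact ENNReal.ofReal_ne_top

lemma integrable_unif (ha : 0 < a) (f : ℝ → ℝ) (hf : Continuous f) : Integrable f (unif (-a) a) := by
  rw [unif]
  refine Integrable.smul_measure ?_ (by simp [ENNReal.inv_ne_top, ENNReal.ofReal_eq_zero]; linarith)
  rw [← IntegrableOn]
  exact hf.continuousOn.integrableOn_compact isCompact_Icc

lemma integral_unif (ha : 0 < a) (f : ℝ → ℝ) :
    ∫ x, f x ∂unif (-a) a = (2 * a)⁻¹ * ∫ x in (-a)..a, f x := by
  rw [unif, integral_smul_measure, intervalIntegral.integral_of_le (by linarith),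
    ← MeasureTheory.integral_Icc_eq_integral_Ioc, smul_eq_mul]
  congr 1
  rw [ENNReal.toReal_inv, ENNReal.toReal_ofReal (by linarith)]
  ring_nf

lemma integral_unif_affine_sq (ha : 0 < a) (c d : ℝ) :
    ∫ x, (c * x + d) ^ 2 ∂unif (-a) a = c ^ 2 * (a ^ 2 / 3) + d ^ 2 := by
  rw [integral_unif ha]
  have : ∀ x : ℝ, (c * x + d) ^ 2 = c^2 * x^2 + (2*c*d) * x + d^2 := by intro x; ring
  simp_rw [this]
  rw [intervalIntegral.integral_add, intervalIntegral.integral_add,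
    intervalIntegral.integral_const_mul, intervalIntegral.integral_const_mul,
    integral_pow, integral_id, intervalIntegral.integral_const]
  · field_simp
    ring
  · exact (intervalIntegral.intervalIntegrable_pow 2).const_mul _
  · exact intervalIntegral.intervalIntegrable_id.const_mul _
  · exact ((intervalIntegral.intervalIntegrable_pow 2).const_mul _).add
      (intervalIntegral.intervalIntegrable_id.const_mul _)
  · exact intervalIntegrable_const

lemma integral_unif_affine (ha : 0 < a) (c d : ℝ) :
    ∫ x, (c * x + d) ∂unif (-a) a = d := by
  rw [integral_unif ha, intervalIntegral.integral_add
    (intervalIntegral.intervalIntegrable_id.const_mul _) intervalIntegrable_const,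
    intervalIntegral.integral_const_mul, integral_id,
    intervalIntegral.integral_const]
  field_simp
  ring

lemma unif_map_neg : (unif (-a) a).map (fun x => -x) = unif (-a) a := by
  have hkey : (volume : Measure ℝ).restrict (Set.Icc (-a) a)
      = ((volume : Measure ℝ).restrict (Set.Icc (-a) a)).map (fun x : ℝ => -x) := by
    conv_lhs => rw [← Measure.map_neg_eq_self (volume : Measure ℝ)]
    rw [measurableEmbedding_neg.restrict_map]
    have hset : (fun x : ℝ => -x) ⁻¹' Set.Icc (-a) a = Set.Icc (-a) a := by
      ext x
      simp only [Set.mem_preimage, Set.mem_Icc]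
      constructor
      · rintro ⟨h1, h2⟩; exact ⟨by linarith, by linarith⟩
      · rintro ⟨h1, h2⟩; exact ⟨by linarith, by linarith⟩
    show ((volume : Measure ℝ).restrict ((fun x : ℝ => -x) ⁻¹' Set.Icc (-a) a)).map (fun x : ℝ => -x) = _
    rw [hset]
  rw [unif, Measure.map_smul, ← hkey]

lemma unif_ae_abs_le (ha : 0 < a) : ∀ᵐ x ∂unif (-a) a, |x| ≤ a := by
  rw [ae_iff, unif, Measure.smul_apply]
  convert smul_zero _
  have hms : MeasurableSet {x : ℝ | ¬|x| ≤ a} :=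
    (measurableSet_le measurable_abs measurable_const).compl
  rw [Measure.restrict_apply hms]
  have hset : {x : ℝ | ¬|x| ≤ a} ∩ Set.Icc (-a) a = ∅ := by
    rw [Set.eq_empty_iff_forall_notMem]
    rintro x ⟨hx, h1, h2⟩
    exact hx (abs_le.2 ⟨h1, h2⟩)
  rw [hset, measure_empty]

end OneD

section PiLemmas
variable {n : ℕ} {μ : Fin n → Measure ℝ} [∀ i, IsProbabilityMeasure (μ i)]

lemma pi_map_eval (i : Fin n) : (Measure.pi μ).map (Function.eval i) = μ i := by
  ext s hs
  rw [Measure.map_apply (measurable_pi_apply i) hs, Set.eval_preimage, Measure.pi_pi]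
  rw [Finset.prod_eq_single i]
  · simp
  · intro j _ hj
    simp [Function.update_of_ne hj]
  · simp

lemma pi_map_coord (f : Fin n → ℝ → ℝ) (hf : ∀ i, Measurable (f i)) :
    (Measure.pi μ).map (fun x i => f i (x i)) = Measure.pi (fun i => (μ i).map (f i)) := by
  haveI : ∀ i, IsProbabilityMeasure ((μ i).map (f i)) :=
    fun i => Measure.isProbabilityMeasure_map (hf i).aemeasurable
  refine (Measure.pi_eq (μ := fun i => (μ i).map (f i)) fun s hs => ?_).symm
  have hm : Measurable (fun (x : Fin n → ℝ) i => f i (x i)) :=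
    measurable_pi_lambda _ fun i => (hf i).comp (measurable_pi_apply i)
  rw [Measure.map_apply hm (MeasurableSet.univ_pi hs)]
  have hpre : (fun (x : Fin n → ℝ) i => f i (x i)) ⁻¹' Set.pi Set.univ s
      = Set.pi Set.univ (fun i => f i ⁻¹' s i) := by
    ext x; simp
  rw [hpre, Measure.pi_pi]
  exact Finset.prod_congr rfl fun i _ => (Measure.map_apply (hf i) (hs i)).symm

end PiLemmas

section CS
variable {α : Type*} [MeasurableSpace α] {ν : Measure α} {f g : α → ℝ}

lemma integral_mul_le_sqrt (hf2 : Integrable (fun x => f x ^ 2) ν)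
    (hg2 : Integrable (fun x => g x ^ 2) ν) (hfg : Integrable (fun x => f x * g x) ν) :
    ∫ x, f x * g x ∂ν ≤ Real.sqrt (∫ x, f x ^ 2 ∂ν) * Real.sqrt (∫ x, g x ^ 2 ∂ν) := by
  have hA : 0 ≤ ∫ x, f x ^ 2 ∂ν := integral_nonneg fun x => sq_nonneg _
  have hC : 0 ≤ ∫ x, g x ^ 2 ∂ν := integral_nonneg fun x => sq_nonneg _
  have key : ∀ t : ℝ, 0 ≤ (∫ x, f x ^ 2 ∂ν) * (t * t) + (2 * ∫ x, f x * g x ∂ν) * t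
      + ∫ x, g x ^ 2 ∂ν := by
    intro t
    have h1 : 0 ≤ ∫ x, (t * f x + g x) ^ 2 ∂ν := integral_nonneg fun x => sq_nonneg _
    have h2 : ∫ x, (t * f x + g x) ^ 2 ∂ν
        = (∫ x, f x ^ 2 ∂ν) * (t * t) + (2 * ∫ x, f x * g x ∂ν) * t + ∫ x, g x ^ 2 ∂ν := by
      have hptw : ∀ x, (t * f x + g x) ^ 2
          = (t * t) * f x ^ 2 + (2 * t) * (f x * g x) + g x ^ 2 := fun x => by ring
      simp_rw [hptw]
      have hI1 : Integrable (fun x => t * t * f x ^ 2 + 2 * t * (f x * g x)) ν :=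
        (hf2.const_mul _).add (hfg.const_mul _)
      rw [integral_add hI1 hg2, integral_add (hf2.const_mul (t * t)) (hfg.const_mul (2 * t)),
        integral_const_mul, integral_const_mul]
      ring
    linarith [h2 ▸ h1]
  have hd := discrim_le_zero key
  rw [discrim] at hd
  have hsq : (∫ x, f x * g x ∂ν) ^ 2 ≤ (∫ x, f x ^ 2 ∂ν) * ∫ x, g x ^ 2 ∂ν := by nlinarith
  calc ∫ x, f x * g x ∂ν ≤ |∫ x, f x * g x ∂ν| := le_abs_self _
    _ = Real.sqrt ((∫ x, f x * g x ∂ν) ^ 2) := (Real.sqrt_sq_eq_abs _).symm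
    _ ≤ Real.sqrt ((∫ x, f x ^ 2 ∂ν) * ∫ x, g x ^ 2 ∂ν) := Real.sqrt_le_sqrt hsq
    _ = _ := Real.sqrt_mul hA _

end CS

section MomentBound
variable {Ω : Type*} [MeasurableSpace Ω] {γ : Measure Ω} [IsProbabilityMeasure γ]

lemma moment_bound {X Y : Ω → ℝ} {CX CY mX mY vX vY : ℝ}
    (hX : Measurable X) (hY : Measurable Y)
    (hXb : ∀ᵐ ω ∂γ, |X ω| ≤ CX) (hYb : ∀ᵐ ω ∂γ, |Y ω| ≤ CY)
    (hEX : ∫ ω, X ω ∂γ = mX) (hEY : ∫ ω, Y ω ∂γ = mY)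
    (hEX2 : ∫ ω, X ω ^ 2 ∂γ = vX + mX ^ 2) (hEY2 : ∫ ω, Y ω ^ 2 ∂γ = vY + mY ^ 2)
    (hvX : 0 ≤ vX) (hvY : 0 ≤ vY) :
    (mX - mY) ^ 2 + (Real.sqrt vX - Real.sqrt vY) ^ 2 ≤ ∫ ω, (X ω - Y ω) ^ 2 ∂γ := by
  -- integrability
  have hXi : Integrable X γ :=
    ⟨hX.aestronglyMeasurable, HasFiniteIntegral.of_bounded (C := CX)
      (by filter_upwards [hXb] with ω h using by rwa [Real.norm_eq_abs])⟩
  have hYi : Integrable Y γ :=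
    ⟨hY.aestronglyMeasurable, HasFiniteIntegral.of_bounded (C := CY)
      (by filter_upwards [hYb] with ω h using by rwa [Real.norm_eq_abs])⟩
  have hX2i : Integrable (fun ω => X ω ^ 2) γ :=
    ⟨(hX.pow_const 2).aestronglyMeasurable, HasFiniteIntegral.of_bounded (C := CX ^ 2)
      (by
        filter_upwards [hXb] with ω h
        rw [Real.norm_eq_abs, abs_pow]
        exact pow_le_pow_left₀ (abs_nonneg _) h 2)⟩
  have hY2i : Integrable (fun ω => Y ω ^ 2) γ :=
    ⟨(hY.pow_const 2).aestronglyMeasurable, HasFiniteIntegral.of_bounded (C := CY ^ 2)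
      (by
        filter_upwards [hYb] with ω h
        rw [Real.norm_eq_abs, abs_pow]
        exact pow_le_pow_left₀ (abs_nonneg _) h 2)⟩
  have hXYi : Integrable (fun ω => X ω * Y ω) γ :=
    ⟨(hX.mul hY).aestronglyMeasurable, HasFiniteIntegral.of_bounded (C := CX * CY)
      (by
        filter_upwards [hXb, hYb] with ω h1 h2
        rw [Real.norm_eq_abs, abs_mul]
        exact mul_le_mul h1 h2 (abs_nonneg _) (le_trans (abs_nonneg _) h1))⟩
  -- centered functions
  set f : Ω → ℝ := fun ω => X ω - mX with hf
  set g : Ω → ℝ := fun ω => Y ω - mY with hg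
  have hf2i : Integrable (fun ω => f ω ^ 2) γ := by
    have : (fun ω => f ω ^ 2) = fun ω => X ω ^ 2 - (2 * mX) * X ω + mX ^ 2 :=
      funext fun ω => by simp only [hf]; ring
    rw [this]
    exact (hX2i.sub (hXi.const_mul _)).add (integrable_const _)
  have hg2i : Integrable (fun ω => g ω ^ 2) γ := by
    have : (fun ω => g ω ^ 2) = fun ω => Y ω ^ 2 - (2 * mY) * Y ω + mY ^ 2 :=
      funext fun ω => by simp only [hg]; ring
    rw [this]
    exact (hY2i.sub (hYi.const_mul _)).add (integrable_const _)
  have hfgi : Integrable (fun ω => f ω * g ω) γ := by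
    have : (fun ω => f ω * g ω)
        = fun ω => X ω * Y ω - mX * Y ω - mY * X ω + mX * mY :=
      funext fun ω => by simp only [hf, hg]; ring
    rw [this]
    exact ((hXYi.sub (hYi.const_mul _)).sub (hXi.const_mul _)).add (integrable_const _)
  -- centered moments
  have hEf2 : ∫ ω, f ω ^ 2 ∂γ = vX := by
    have : (fun ω => f ω ^ 2) = fun ω => X ω ^ 2 - (2 * mX) * X ω + mX ^ 2 :=
      funext fun ω => by simp only [hf]; ring
    have i1 : Integrable (fun ω => X ω ^ 2 - 2 * mX * X ω) γ := hX2i.sub (hXi.const_mul _)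
    have i2 : Integrable (fun ω => 2 * mX * X ω) γ := hXi.const_mul _
    rw [this, integral_add i1 (integrable_const _), integral_sub hX2i i2,
      integral_const_mul, hEX, hEX2, integral_const]
    simp; ring
  have hEg2 : ∫ ω, g ω ^ 2 ∂γ = vY := by
    have : (fun ω => g ω ^ 2) = fun ω => Y ω ^ 2 - (2 * mY) * Y ω + mY ^ 2 :=
      funext fun ω => by simp only [hg]; ring
    have i1 : Integrable (fun ω => Y ω ^ 2 - 2 * mY * Y ω) γ := hY2i.sub (hYi.const_mul _)
    have i2 : Integrable (fun ω => 2 * mY * Y ω) γ := hYi.const_mul _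
    rw [this, integral_add i1 (integrable_const _), integral_sub hY2i i2,
      integral_const_mul, hEY, hEY2, integral_const]
    simp; ring
  have hEfg : ∫ ω, f ω * g ω ∂γ = (∫ ω, X ω * Y ω ∂γ) - mX * mY := by
    have : (fun ω => f ω * g ω)
        = fun ω => X ω * Y ω - mX * Y ω - mY * X ω + mX * mY :=
      funext fun ω => by simp only [hf, hg]; ring
    have i2 : Integrable (fun ω => mX * Y ω) γ := hYi.const_mul _
    have i3 : Integrable (fun ω => mY * X ω) γ := hXi.const_mul _
    have i1 : Integrable (fun ω => X ω * Y ω - mX * Y ω) γ := hXYi.sub i2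
    have i0 : Integrable (fun ω => X ω * Y ω - mX * Y ω - mY * X ω) γ := i1.sub i3
    rw [this, integral_add i0 (integrable_const _), integral_sub i1 i3,
      integral_sub hXYi i2, integral_const_mul, integral_const_mul,
      hEX, hEY, integral_const]
    simp; ring
  -- Cauchy-Schwarz
  have hcs := integral_mul_le_sqrt hf2i hg2i hfgi
  rw [hEf2, hEg2, hEfg] at hcs
  have hXY_le : ∫ ω, X ω * Y ω ∂γ ≤ Real.sqrt vX * Real.sqrt vY + mX * mY := by linarith
  -- expand the target integral
  have hexp : ∫ ω, (X ω - Y ω) ^ 2 ∂γ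
      = (vX + mX ^ 2) + (vY + mY ^ 2) - 2 * ∫ ω, X ω * Y ω ∂γ := by
    have : (fun ω => (X ω - Y ω) ^ 2)
        = fun ω => X ω ^ 2 + Y ω ^ 2 - 2 * (X ω * Y ω) :=
      funext fun ω => by ring
    have i1 : Integrable (fun ω => X ω ^ 2 + Y ω ^ 2) γ := hX2i.add hY2i
    have i2 : Integrable (fun ω => 2 * (X ω * Y ω)) γ := hXYi.const_mul _
    rw [this, integral_sub i1 i2, integral_add hX2i hY2i, integral_const_mul, hEX2, hEY2]
  have hsX : Real.sqrt vX ^ 2 = vX := Real.sq_sqrt hvX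
  have hsY : Real.sqrt vY ^ 2 = vY := Real.sq_sqrt hvY
  nlinarith [hXY_le, hexp]

end MomentBound

section PmHelpers
variable {n : ℕ} {a : ℝ}

lemma Pm_integrable_coord (ha : 0 < a) (c d : ℝ) (i : Fin n) :
    Integrable (fun x : Fin n → ℝ => (c * x i + d) ^ 2)
      (Measure.pi fun _ : Fin n => unif (-a) a) := by
  have h1 : Integrable (fun r : ℝ => (c * r + d) ^ 2) (unif (-a) a) :=
    integrable_unif ha _ (by continuity)
  rw [← @pi_map_eval n (fun _ => unif (-a) a) (fun _ => unif_prob ha) i] at h1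
  exact (integrable_map_measure h1.aestronglyMeasurable
    (measurable_pi_apply i).aemeasurable).1 h1

lemma Pm_integral_sq (ha : 0 < a) (c d : ℝ) (i : Fin n) :
    ∫ x : Fin n → ℝ, (c * x i + d) ^ 2 ∂(Measure.pi fun _ : Fin n => unif (-a) a)
      = c ^ 2 * (a ^ 2 / 3) + d ^ 2 := by
  have hsm : AEStronglyMeasurable (fun r : ℝ => (c * r + d) ^ 2)
      ((Measure.pi fun _ : Fin n => unif (-a) a).map (Function.eval i)) :=
    (Continuous.aestronglyMeasurable (by continuity))
  have key := integral_map (μ := Measure.pi fun _ : Fin n => unif (-a) a)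
    (φ := Function.eval i) (measurable_pi_apply i).aemeasurable hsm
  rw [@pi_map_eval n (fun _ => unif (-a) a) (fun _ => unif_prob ha) i] at key
  rw [← key]
  exact integral_unif_affine_sq ha c d

lemma Pm_integral_affine (ha : 0 < a) (c d : ℝ) (i : Fin n) :
    ∫ x : Fin n → ℝ, (c * x i + d) ∂(Measure.pi fun _ : Fin n => unif (-a) a) = d := by
  have hsm : AEStronglyMeasurable (fun r : ℝ => c * r + d)
      ((Measure.pi fun _ : Fin n => unif (-a) a).map (Function.eval i)) :=
    (Continuous.aestronglyMeasurable (by continuity))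
  have key := integral_map (μ := Measure.pi fun _ : Fin n => unif (-a) a)
    (φ := Function.eval i) (measurable_pi_apply i).aemeasurable hsm
  rw [@pi_map_eval n (fun _ => unif (-a) a) (fun _ => unif_prob ha) i] at key
  rw [← key]
  exact integral_unif_affine ha c d

lemma Pm_coord_null (ha : 0 < a) (i : Fin n) :
    (Measure.pi fun _ : Fin n => unif (-a) a) {x : Fin n → ℝ | ¬|x i| ≤ a} = 0 := by
  have h0 : unif (-a) a {r : ℝ | ¬|r| ≤ a} = 0 := by
    have := unif_ae_abs_le (a := a) ha
    rw [ae_iff] at this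
    exact this
  have : {x : Fin n → ℝ | ¬|x i| ≤ a} = Function.eval i ⁻¹' {r : ℝ | ¬|r| ≤ a} := rfl
  rw [this]
  haveI hsf : ∀ j : Fin n, SigmaFinite ((fun _ : Fin n => unif (-a) a) j) := by
    intro j
    haveI := unif_prob (a := a) ha
    infer_instance
  exact @Measure.pi_eval_preimage_null (Fin n) _ _ _ (fun _ : Fin n => unif (-a) a) hsf i _ h0

lemma sq_eps (s t : ℝ) :
    (s - (if s * t < 0 then (-1 : ℝ) else 1) * t) ^ 2 = (|s| - |t|) ^ 2 := by
  have h1 : |s| * |t| = |s * t| := (abs_mul s t).symm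
  have h2 : |s| ^ 2 = s ^ 2 := sq_abs s
  have h3 : |t| ^ 2 = t ^ 2 := sq_abs t
  rcases lt_or_ge (s * t) 0 with h | h
  · rw [if_pos h]
    have h4 : |s * t| = -(s * t) := abs_of_neg h
    nlinarith
  · rw [if_neg (not_lt.2 h)]
    have h4 : |s * t| = s * t := abs_of_nonneg h
    nlinarith

end PmHelpers

lemma W2sqPi_affine {n : ℕ} {a : ℝ} (ha : 0 < a) (s m t u : Fin n → ℝ) :
    W2sqPi ((Measure.pi fun _ : Fin n => unif (-a) a).map fun x => s * x + m)
           ((Measure.pi fun _ : Fin n => unif (-a) a).map fun x => t * x + u)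
    = (∑ i, (m i - u i) ^ 2) + (a ^ 2 / 3) * ∑ i, (|s i| - |t i|) ^ 2 := by
  classical
  haveI hup : IsProbabilityMeasure (unif (-a) a) := unif_prob ha
  haveI hupi : ∀ j : Fin n, IsProbabilityMeasure ((fun _ : Fin n => unif (-a) a) j) :=
    fun _ => unif_prob ha
  set P : Measure (Fin n → ℝ) := Measure.pi fun _ : Fin n => unif (-a) a with hPdef
  haveI hPp : IsProbabilityMeasure P := by
    rw [hPdef]; infer_instance
  have hAc : Continuous (fun x : Fin n → ℝ => s * x + m) :=
    (continuous_const.mul continuous_id).add continuous_const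
  have hBc : Continuous (fun x : Fin n → ℝ => t * x + u) :=
    (continuous_const.mul continuous_id).add continuous_const
  have hAm := hAc.measurable
  have hBm := hBc.measurable
  set v : ℝ := (∑ i, (m i - u i) ^ 2) + (a ^ 2 / 3) * ∑ i, (|s i| - |t i|) ^ 2 with hv
  obtain ⟨ε, hε1, hε2⟩ : ∃ ε : Fin n → ℝ, (∀ i, ε i = 1 ∨ ε i = -1) ∧
      ∀ i, (s i - ε i * t i) ^ 2 = (|s i| - |t i|) ^ 2 := by
    refine ⟨fun i => if s i * t i < 0 then -1 else 1, fun i => ?_, fun i => sq_eps (s i) (t i)⟩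
    by_cases h : s i * t i < 0
    · exact Or.inr (if_pos h)
    · exact Or.inl (if_neg h)
  -- upper bound: explicit coupling
  have hub : v ∈ { c | ∃ γ : Measure ((Fin n → ℝ) × (Fin n → ℝ)), IsProbabilityMeasure γ ∧
      γ.map Prod.fst = P.map (fun x => s * x + m) ∧
      γ.map Prod.snd = P.map (fun x => t * x + u) ∧
      c = ∫ z, ∑ i, (z.1 i - z.2 i) ^ 2 ∂γ } := by
    have hεc : Continuous (fun x : Fin n → ℝ => ε * x) := continuous_const.mul continuous_id
    have hTc : Continuous (fun x : Fin n → ℝ => (s * x + m, t * (ε * x) + u)) :=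
      Continuous.prodMk ((continuous_const.mul continuous_id).add continuous_const)
        ((continuous_const.mul hεc).add continuous_const)
    have hTm := hTc.measurable
    have hεm := hεc.measurable
    have hPinv : P.map (fun x : Fin n → ℝ => ε * x) = P := by
      have hcoord : (fun x : Fin n → ℝ => ε * x)
          = fun x i => (fun r => ε i * r) (x i) := rfl
      rw [hPdef, hcoord, @pi_map_coord n (fun _ => unif (-a) a) hupi
        (fun i r => ε i * r) (fun i => measurable_id.const_mul (ε i))]
      congr 1
      funext i
      rcases hε1 i with hεi | hεi
      · rw [hεi]
        have h2 : (fun r : ℝ => (1 : ℝ) * r) = id := funext fun r => one_mul r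
        rw [h2, Measure.map_id]
      · rw [hεi]
        have h2 : (fun r : ℝ => (-1 : ℝ) * r) = fun r : ℝ => -r := funext fun r => by ring
        rw [h2, unif_map_neg]
    refine ⟨P.map (fun x => (s * x + m, t * (ε * x) + u)),
      Measure.isProbabilityMeasure_map hTm.aemeasurable, ?_, ?_, ?_⟩
    · rw [Measure.map_map measurable_fst hTm]
      rfl
    · rw [Measure.map_map measurable_snd hTm]
      have hstep : (Prod.snd ∘ (fun x : Fin n → ℝ => (s * x + m, t * (ε * x) + u)))
          = ((fun x : Fin n → ℝ => t * x + u) ∘ (fun x : Fin n → ℝ => ε * x)) := rfl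
      rw [hstep, ← Measure.map_map hBm hεm, hPinv]
    · symm
      have hsumc : Continuous (fun z : (Fin n → ℝ) × (Fin n → ℝ) =>
          ∑ i, (z.1 i - z.2 i) ^ 2) :=
        continuous_finset_sum _ fun i _ =>
          (((continuous_apply i).comp continuous_fst).sub
            ((continuous_apply i).comp continuous_snd)).pow 2
      rw [integral_map hTm.aemeasurable hsumc.aestronglyMeasurable]
      have hptw : ∀ x : Fin n → ℝ,
          (∑ i, ((s * x + m) i - (t * (ε * x) + u) i) ^ 2)
          = ∑ i, ((s i - ε i * t i) * x i + (m i - u i)) ^ 2 := by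
        intro x
        refine Finset.sum_congr rfl fun i _ => ?_
        simp only [Pi.add_apply, Pi.mul_apply]
        ring
      rw [integral_congr_ae (Filter.Eventually.of_forall hptw)]
      rw [integral_finset_sum _ (fun i _ => Pm_integrable_coord ha _ _ i)]
      have hval : ∀ i : Fin n, ∫ x : Fin n → ℝ, ((s i - ε i * t i) * x i + (m i - u i)) ^ 2 ∂P
          = (|s i| - |t i|) ^ 2 * (a ^ 2 / 3) + (m i - u i) ^ 2 := by
        intro i
        rw [hPdef, Pm_integral_sq ha]
        rw [hε2 i]
      rw [Finset.sum_congr rfl (fun i _ => hval i), hv, Finset.sum_add_distrib,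
        Finset.mul_sum, add_comm]
      congr 1
      exact Finset.sum_congr rfl fun i _ => mul_comm _ _
  -- lower bound
  have hlb : ∀ c ∈ { c | ∃ γ : Measure ((Fin n → ℝ) × (Fin n → ℝ)), IsProbabilityMeasure γ ∧
      γ.map Prod.fst = P.map (fun x => s * x + m) ∧
      γ.map Prod.snd = P.map (fun x => t * x + u) ∧
      c = ∫ z, ∑ i, (z.1 i - z.2 i) ^ 2 ∂γ }, v ≤ c := by
    rintro c ⟨γ, hγ, hfst, hsnd, rfl⟩
    haveI := hγ
    -- a.e. coordinate bounds
    have hae1 : ∀ i : Fin n, ∀ᵐ z ∂γ, |z.1 i| ≤ |s i| * a + |m i| := by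
      intro i
      rw [ae_iff]
      have hms : MeasurableSet {w : Fin n → ℝ | ¬|w i| ≤ |s i| * a + |m i|} :=
        (measurableSet_le (measurable_pi_apply i).abs measurable_const).compl
      have hsetp : {z : (Fin n → ℝ) × (Fin n → ℝ) | ¬|z.1 i| ≤ |s i| * a + |m i|}
          = Prod.fst ⁻¹' {w : Fin n → ℝ | ¬|w i| ≤ |s i| * a + |m i|} := rfl
      rw [hsetp, ← Measure.map_apply measurable_fst hms, hfst,
        Measure.map_apply hAm hms]
      refine measure_mono_null ?_ (by rw [hPdef] at *; exact Pm_coord_null ha i)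
      intro x hx
      simp only [Set.mem_preimage, Set.mem_setOf_eq] at hx ⊢
      intro habs
      refine hx ?_
      have h1 : (s * x + m) i = s i * x i + m i := rfl
      rw [h1]
      calc |s i * x i + m i| ≤ |s i * x i| + |m i| := abs_add_le _ _
        _ = |s i| * |x i| + |m i| := by rw [abs_mul]
        _ ≤ |s i| * a + |m i| := by nlinarith [abs_nonneg (s i), abs_nonneg (x i)]
    have hae2 : ∀ i : Fin n, ∀ᵐ z ∂γ, |z.2 i| ≤ |t i| * a + |u i| := by
      intro i
      rw [ae_iff]
      have hms : MeasurableSet {w : Fin n → ℝ | ¬|w i| ≤ |t i| * a + |u i|} :=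
        (measurableSet_le (measurable_pi_apply i).abs measurable_const).compl
      have hsetp : {z : (Fin n → ℝ) × (Fin n → ℝ) | ¬|z.2 i| ≤ |t i| * a + |u i|}
          = Prod.snd ⁻¹' {w : Fin n → ℝ | ¬|w i| ≤ |t i| * a + |u i|} := rfl
      rw [hsetp, ← Measure.map_apply measurable_snd hms, hsnd,
        Measure.map_apply hBm hms]
      refine measure_mono_null ?_ (by rw [hPdef] at *; exact Pm_coord_null ha i)
      intro x hx
      simp only [Set.mem_preimage, Set.mem_setOf_eq] at hx ⊢
      intro habs
      refine hx ?_
      have h1 : (t * x + u) i = t i * x i + u i := rfl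
      rw [h1]
      calc |t i * x i + u i| ≤ |t i * x i| + |u i| := abs_add_le _ _
        _ = |t i| * |x i| + |u i| := by rw [abs_mul]
        _ ≤ |t i| * a + |u i| := by nlinarith [abs_nonneg (t i), abs_nonneg (x i)]
    -- moments
    have hEX : ∀ i : Fin n, ∫ z, z.1 i ∂γ = m i := by
      intro i
      have h1 : ∫ w, w i ∂(γ.map Prod.fst) = ∫ z, z.1 i ∂γ :=
        integral_map measurable_fst.aemeasurable
          (measurable_pi_apply i).aestronglyMeasurable
      rw [← h1, hfst, integral_map hAm.aemeasurable
        (measurable_pi_apply i).aestronglyMeasurable]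
      have : ∀ x : Fin n → ℝ, (s * x + m) i = s i * x i + m i := fun x => rfl
      simp_rw [this]
      rw [hPdef]
      exact Pm_integral_affine ha _ _ i
    have hEY : ∀ i : Fin n, ∫ z, z.2 i ∂γ = u i := by
      intro i
      have h1 : ∫ w, w i ∂(γ.map Prod.snd) = ∫ z, z.2 i ∂γ :=
        integral_map measurable_snd.aemeasurable
          (measurable_pi_apply i).aestronglyMeasurable
      rw [← h1, hsnd, integral_map hBm.aemeasurable
        (measurable_pi_apply i).aestronglyMeasurable]
      have : ∀ x : Fin n → ℝ, (t * x + u) i = t i * x i + u i := fun x => rfl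
      simp_rw [this]
      rw [hPdef]
      exact Pm_integral_affine ha _ _ i
    have hEX2 : ∀ i : Fin n, ∫ z, (z.1 i) ^ 2 ∂γ = (s i) ^ 2 * (a ^ 2 / 3) + (m i) ^ 2 := by
      intro i
      have h1 : ∫ w, (w i) ^ 2 ∂(γ.map Prod.fst) = ∫ z, (z.1 i) ^ 2 ∂γ :=
        integral_map measurable_fst.aemeasurable
          ((measurable_pi_apply i).pow_const 2).aestronglyMeasurable
      rw [← h1, hfst, integral_map hAm.aemeasurable
        ((measurable_pi_apply i).pow_const 2).aestronglyMeasurable]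
      have : ∀ x : Fin n → ℝ, ((s * x + m) i) ^ 2 = (s i * x i + m i) ^ 2 := fun x => rfl
      simp_rw [this]
      rw [hPdef]
      exact Pm_integral_sq ha _ _ i
    have hEY2 : ∀ i : Fin n, ∫ z, (z.2 i) ^ 2 ∂γ = (t i) ^ 2 * (a ^ 2 / 3) + (u i) ^ 2 := by
      intro i
      have h1 : ∫ w, (w i) ^ 2 ∂(γ.map Prod.snd) = ∫ z, (z.2 i) ^ 2 ∂γ :=
        integral_map measurable_snd.aemeasurable
          ((measurable_pi_apply i).pow_const 2).aestronglyMeasurable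
      rw [← h1, hsnd, integral_map hBm.aemeasurable
        ((measurable_pi_apply i).pow_const 2).aestronglyMeasurable]
      have : ∀ x : Fin n → ℝ, ((t * x + u) i) ^ 2 = (t i * x i + u i) ^ 2 := fun x => rfl
      simp_rw [this]
      rw [hPdef]
      exact Pm_integral_sq ha _ _ i
    -- per-coordinate lower bound
    have hcoord : ∀ i : Fin n,
        (m i - u i) ^ 2 + (a ^ 2 / 3) * (|s i| - |t i|) ^ 2
          ≤ ∫ z, (z.1 i - z.2 i) ^ 2 ∂γ := by
      intro i
      have hb := moment_bound (γ := γ)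
        (X := fun z : (Fin n → ℝ) × (Fin n → ℝ) => z.1 i)
        (Y := fun z : (Fin n → ℝ) × (Fin n → ℝ) => z.2 i)
        ((measurable_pi_apply i).comp measurable_fst)
        ((measurable_pi_apply i).comp measurable_snd)
        (hae1 i) (hae2 i) (hEX i) (hEY i) (hEX2 i) (hEY2 i)
        (by positivity) (by positivity)
      have hsq : (Real.sqrt ((s i) ^ 2 * (a ^ 2 / 3))
          - Real.sqrt ((t i) ^ 2 * (a ^ 2 / 3))) ^ 2
          = (a ^ 2 / 3) * (|s i| - |t i|) ^ 2 := by
        rw [Real.sqrt_mul (sq_nonneg (s i)), Real.sqrt_mul (sq_nonneg (t i)),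
          Real.sqrt_sq_eq_abs, Real.sqrt_sq_eq_abs]
        have h3 : Real.sqrt (a ^ 2 / 3) ^ 2 = a ^ 2 / 3 :=
          Real.sq_sqrt (by positivity)
        nlinarith [h3]
      rw [hsq] at hb
      exact hb
    -- integrability of each coordinate summand
    have hint : ∀ i : Fin n,
        Integrable (fun z : (Fin n → ℝ) × (Fin n → ℝ) => (z.1 i - z.2 i) ^ 2) γ := by
      intro i
      refine ⟨((((measurable_pi_apply i).comp measurable_fst).sub
        ((measurable_pi_apply i).comp measurable_snd)).pow_const 2).aestronglyMeasurable,
        HasFiniteIntegral.of_bounded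
          (C := ((|s i| * a + |m i|) + (|t i| * a + |u i|)) ^ 2) ?_⟩
      filter_upwards [hae1 i, hae2 i] with z h1 h2
      rw [Real.norm_eq_abs, abs_pow]
      refine pow_le_pow_left₀ (abs_nonneg _) ?_ 2
      calc |z.1 i - z.2 i| ≤ |z.1 i| + |z.2 i| := abs_sub _ _
        _ ≤ _ := add_le_add h1 h2
    rw [integral_finset_sum _ (fun i _ => hint i), hv]
    calc (∑ i, (m i - u i) ^ 2) + (a ^ 2 / 3) * ∑ i, (|s i| - |t i|) ^ 2
        = ∑ i, ((m i - u i) ^ 2 + (a ^ 2 / 3) * (|s i| - |t i|) ^ 2) := by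
          rw [Finset.sum_add_distrib, Finset.mul_sum]
      _ ≤ ∑ i, ∫ z, (z.1 i - z.2 i) ^ 2 ∂γ := Finset.sum_le_sum fun i _ => hcoord i
  -- conclude
  rw [W2sqPi]
  exact le_antisymm (csInf_le ⟨v, fun c hc => hlb c hc⟩ hub) (le_csInf ⟨v, hub⟩ hlb)

/-- As the initial uniform distribution on [-√3/k, √3/k]ⁿ concentrates (k → ∞), the negated
squared 2-Wasserstein score of NFE-1 equals
-‖r_σ ⊙ h_μ + r_μ - t_μ‖² - (1/k²)·‖|r_σ ⊙ h_σ| - |t_σ|‖² for every k > 0, and tends to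
-‖r_σ ⊙ h_μ + r_μ - t_μ‖², the score without uncertainty. -/
theorem neg_W2sq_tendsto_of_concentrating_unif (n : ℕ) (hμ hσ rμ rσ tμ tσ : Fin n → ℝ)
    (hhσ : ∀ i, hσ i ≠ 0) (hrσ : ∀ i, rσ i ≠ 0) (htσ : ∀ i, tσ i ≠ 0) :
    (∀ k : ℝ, 0 < k →
      -W2sqPi
          ((Measure.pi fun _ : Fin n => unif (-Real.sqrt 3 / k) (Real.sqrt 3 / k)).map
            fun x => rσ * (hσ * x + hμ) + rμ)
          ((Measure.pi fun _ : Fin n => unif (-Real.sqrt 3 / k) (Real.sqrt 3 / k)).map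
            fun x => tσ * x + tμ) =
        -(∑ i, ((rσ * hμ + rμ - tμ) i) ^ 2)
          - (1 / k ^ 2) * ∑ i, ((|rσ * hσ| - |tσ|) i) ^ 2) ∧
    Filter.Tendsto
      (fun k : ℝ =>
        -W2sqPi
          ((Measure.pi fun _ : Fin n => unif (-Real.sqrt 3 / k) (Real.sqrt 3 / k)).map
            fun x => rσ * (hσ * x + hμ) + rμ)
          ((Measure.pi fun _ : Fin n => unif (-Real.sqrt 3 / k) (Real.sqrt 3 / k)).map
            fun x => tσ * x + tμ))
      Filter.atTop (nhds (-(∑ i, ((rσ * hμ + rμ - tμ) i) ^ 2))) := by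
  have hkey : ∀ k : ℝ, 0 < k →
      -W2sqPi
          ((Measure.pi fun _ : Fin n => unif (-Real.sqrt 3 / k) (Real.sqrt 3 / k)).map
            fun x => rσ * (hσ * x + hμ) + rμ)
          ((Measure.pi fun _ : Fin n => unif (-Real.sqrt 3 / k) (Real.sqrt 3 / k)).map
            fun x => tσ * x + tμ) =
        -(∑ i, ((rσ * hμ + rμ - tμ) i) ^ 2)
          - (1 / k ^ 2) * ∑ i, ((|rσ * hσ| - |tσ|) i) ^ 2 := by
    intro k hk
    have ha : 0 < Real.sqrt 3 / k := div_pos (Real.sqrt_pos.2 (by norm_num)) hk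
    have hneg : -Real.sqrt 3 / k = -(Real.sqrt 3 / k) := neg_div _ _
    have hfun : (fun x : Fin n → ℝ => rσ * (hσ * x + hμ) + rμ)
        = fun x => (rσ * hσ) * x + (rσ * hμ + rμ) := funext fun x => by ring
    rw [hneg, hfun, W2sqPi_affine ha (rσ * hσ) (rσ * hμ + rμ) tσ tμ]
    have ha2 : (Real.sqrt 3 / k) ^ 2 / 3 = 1 / k ^ 2 := by
      rw [div_pow, Real.sq_sqrt (by norm_num : (0:ℝ) ≤ 3)]
      field_simp
    have e1 : (∑ i, ((rσ * hμ + rμ) i - tμ i) ^ 2) = ∑ i, ((rσ * hμ + rμ - tμ) i) ^ 2 :=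
      Finset.sum_congr rfl fun i _ => by simp [Pi.sub_apply]
    have e2 : (∑ i, (|(rσ * hσ) i| - |tσ i|) ^ 2) = ∑ i, ((|rσ * hσ| - |tσ|) i) ^ 2 :=
      Finset.sum_congr rfl fun i _ => by simp [Pi.sub_apply, Pi.abs_apply]
    rw [ha2, e1, e2]
    ring
  refine ⟨hkey, ?_⟩
  have hev : (fun k : ℝ =>
      -W2sqPi
          ((Measure.pi fun _ : Fin n => unif (-Real.sqrt 3 / k) (Real.sqrt 3 / k)).map
            fun x => rσ * (hσ * x + hμ) + rμ)
          ((Measure.pi fun _ : Fin n => unif (-Real.sqrt 3 / k) (Real.sqrt 3 / k)).map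
            fun x => tσ * x + tμ))
      =ᶠ[Filter.atTop] fun k : ℝ =>
        -(∑ i, ((rσ * hμ + rμ - tμ) i) ^ 2)
          - (1 / k ^ 2) * ∑ i, ((|rσ * hσ| - |tσ|) i) ^ 2 := by
    filter_upwards [Filter.eventually_gt_atTop 0] with k hk using hkey k hk
  refine Filter.Tendsto.congr' hev.symm ?_
  have h0 : Filter.Tendsto (fun k : ℝ => 1 / k ^ 2) Filter.atTop (nhds 0) := by
    have h1 : Filter.Tendsto (fun k : ℝ => k ^ 2) Filter.atTop Filter.atTop :=
      Filter.tendsto_pow_atTop two_ne_zero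
    have := h1.inv_tendsto_atTop
    simp only [one_div]; exact this
  have hT := (tendsto_const_nhds
      (x := -(∑ i, ((rσ * hμ + rμ - tμ) i) ^ 2)) (f := Filter.atTop (α := ℝ))).sub
    (h0.mul_const (∑ i, ((|rσ * hσ| - |tσ|) i) ^ 2))
  simpa using hT
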